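/- arXiv:1407.1179 — 5 statements merged into one kernel-verified Lean document; each statement's English description precedes it below -/
import Mathlib

section
/- For every integer d ≥ 1, the families F_{GP_d} and F_{SGP_d} coincide. Equivalently (since every special generalized polynomial of degree ≤ d is a generalized polynomial of degree ≤ d): for every k ∈ ℕ, all generalized polynomials P_1,…,P_k ∈ GP_d and all ε_1,…,ε_k > 0, there exist m ∈ ℕ, special generalized polynomials Q_1,…,Q_m ∈ SGP_d and δ_1,…,δ_m > 0 such that ⋂_{j=1}^m {n ∈ ℤ : ‖Q_j(n)‖ < δ_j} ⊆ ⋂_{i=1}^k {n ∈ ℤ : ‖P_i(n)‖ < ε_i}. -/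
/-!
Along the filter generated by the sets `{n : ‖Q(n)‖ < δ}`, `Q ∈ SGP_d`, every bracket monomial
`Q` of degree `≤ d` tends to the integer `⌈Q⌉`. The identity
`⌈x⌉⌈y⌉ = x⌈y⌉ + y⌈x⌉ - xy + (x - ⌈x⌉)(y - ⌈y⌉)` and induction on the degree then show that a
product of rounded bracket monomials is, up to a vanishing error, a real combination of bracket
monomials of the summed degree. Since such a combination is asymptotically an integer combination
of rounded bracket monomials, rounding preserves this class too, and an induction over the
generalized polynomials puts every `P ∈ GP_d` in it. Then `‖P‖ → 0` along the filter.
-/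

open scoped Classical
open MeasureTheory Filter Topology

noncomputable section

/-- Integer iterate of a bijection `T` of a set: `zIter T n = T^n`. -/
def zIter {X : Type*} (T : Equiv.Perm X) (n : ℤ) : X → X := ⇑(T ^ n)

/-- Integer iterate of a homeomorphism. -/
def hIter {X : Type*} [TopologicalSpace X] (T : X ≃ₜ X) (n : ℤ) : X → X :=
  zIter T.toEquiv n

/-- The integer nearest to `a`, with ties broken towards the smaller integer.
This is the `⌈·⌉` of the paper. -/
def nearInt (a : ℝ) : ℤ := if a - (⌊a⌋ : ℝ) ≤ 1/2 then ⌊a⌋ else ⌈a⌉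

/-- The distance from `a` to the nearest integer, i.e. `‖a‖` in the paper. -/
def distInt (a : ℝ) : ℝ := |a - (nearInt a : ℝ)|

/-- Generalized polynomials of degree at most `d` (for `d ≥ 1`):
`GP 1` is the smallest collection of functions `ℤ → ℝ` containing `n ↦ a n`
and closed under taking the nearest integer, scalar multiplication and finite sums;
`GP d` moreover contains every `GP e` for `e < d` and all functions
`n ↦ a₀ n^{p₀} ⌈f₁(n)⌉ ⋯ ⌈f k (n)⌉` with `f l ∈ GP (p l)` and `p₀ + ∑ p l = d`. -/
inductive GP : ℕ → (ℤ → ℝ) → Prop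
  | lin (a : ℝ) : GP 1 (fun n => a * n)
  | mono {d : ℕ} (hd : 1 ≤ d) (a₀ : ℝ) (p₀ : ℕ) {k : ℕ} (p : Fin k → ℕ)
      (f : Fin k → ℤ → ℝ) (hf : ∀ l, GP (p l) (f l)) (hsum : p₀ + ∑ l, p l = d) :
      GP d (fun n => a₀ * (n : ℝ) ^ p₀ * ∏ l, (nearInt (f l n) : ℝ))
  | incl {d e : ℕ} (hed : e < d) {f : ℤ → ℝ} (hf : GP e f) : GP d f
  | ceil {d : ℕ} {f : ℤ → ℝ} (hf : GP d f) : GP d (fun n => (nearInt (f n) : ℝ))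
  | smul {d : ℕ} (c : ℝ) {f : ℤ → ℝ} (hf : GP d f) : GP d (fun n => c * f n)
  | add {d : ℕ} {f g : ℤ → ℝ} (hf : GP d f) (hg : GP d g) : GP d (fun n => f n + g n)

/-- The bracket expression `L(a₁, …, a_ℓ) = a₁⌈L(a₂, …, a_ℓ)⌉`, `L(a) = a`. -/
def Lfun : List ℝ → ℝ
  | [] => 0
  | [a] => a
  | a :: b :: rest => a * (nearInt (Lfun (b :: rest)) : ℝ)

/-- Special generalized polynomials of degree at most `d`:
the functions `n ↦ L(n^{j₁} a₁, …, n^{j_ℓ} a_ℓ)` with `1 ≤ ℓ`, `j t ≥ 1`, `∑ j t ≤ d`. -/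
def SGP (d : ℕ) (g : ℤ → ℝ) : Prop :=
  ∃ ℓ : ℕ, 1 ≤ ℓ ∧ ∃ (a : Fin ℓ → ℝ) (j : Fin ℓ → ℕ),
    (∀ t, 1 ≤ j t) ∧ (∑ t, j t) ≤ d ∧
    g = fun n : ℤ => Lfun (List.ofFn fun t => (n : ℝ) ^ (j t) * a t)

/-- `FS({n i}) = {n_{i₁} + ⋯ + n_{i_k} : i₁ < ⋯ < i_k}`, the set of finite sums. -/
def FS {d : ℕ} (n : Fin d → ℤ) : Set ℤ :=
  { m | ∃ I : Finset (Fin d), I.Nonempty ∧ m = ∑ i ∈ I, n i }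

/-- `SG d P`: sums `p_{i₁} + ⋯ + p_{i_k}` over strictly increasing finite index
sequences whose consecutive gaps are at most `d` (infinite sequence `P`). -/
def SG (d : ℕ) (P : ℕ → ℤ) : Set ℤ :=
  { n | ∃ k : ℕ, ∃ i : Fin (k + 1) → ℕ, StrictMono i ∧
      (∀ t : Fin k, i t.succ - i t.castSucc ≤ d) ∧ n = ∑ t, P (i t) }

/-- `SGfin d P` : the same for a finite sequence `P` of length `m`. -/
def SGfin (d : ℕ) {m : ℕ} (P : Fin m → ℤ) : Set ℤ :=
  { n | ∃ k : ℕ, ∃ i : Fin (k + 1) → Fin m, StrictMono i ∧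
      (∀ t : Fin k, (i t.succ : ℕ) - (i t.castSucc : ℕ) ≤ d) ∧ n = ∑ t, P (i t) }

/-- A set of integers is syndetic if it has bounded gaps. -/
def Syndetic (A : Set ℤ) : Prop :=
  ∃ N : ℕ, ∀ i : ℤ, ∃ j, i ≤ j ∧ j ≤ i + N ∧ j ∈ A

/-- `F` has positive upper Banach density. -/
def PosUpperBanachDensity (F : Set ℤ) : Prop :=
  ∃ δ : ℝ, 0 < δ ∧ ∀ N : ℕ, ∃ (a : ℤ) (L : ℕ), N ≤ L ∧ 1 ≤ L ∧
    δ * L ≤ ((Finset.Icc a (a + L - 1)).filter (fun x => x ∈ F)).card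

/-- A set `A ⊆ ℤ` contains finite IP-sets of arbitrarily long lengths. -/
def ContainsArbLongFIP (A : Set ℤ) : Prop :=
  ∀ k : ℕ, 1 ≤ k → ∃ p : Fin k → ℤ, FS p ⊆ A

/-- A topological dynamical system `(X, T)` is minimal: every orbit is dense. -/
def MinimalTDS {X : Type*} [TopologicalSpace X] (T : X ≃ₜ X) : Prop :=
  ∀ x : X, Dense (Set.range fun n : ℤ => hIter T n x)

/-- `Nset T x U = N(x, U) = {n ∈ ℤ : Tⁿ x ∈ U}`. -/
def Nset {X : Type*} [TopologicalSpace X] (T : X ≃ₜ X) (x : X) (U : Set X) : Set ℤ :=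
  { n : ℤ | hIter T n x ∈ U }

/-- The regionally proximal relation of order `d`. -/
def RPd {X : Type*} [MetricSpace X] (T : X ≃ₜ X) (d : ℕ) (x y : X) : Prop :=
  ∀ δ : ℝ, 0 < δ → ∃ (x' y' : X) (n : Fin d → ℤ),
    dist x x' < δ ∧ dist y y' < δ ∧
    ∀ ε : Finset (Fin d), ε.Nonempty →
      dist (hIter T (∑ i ∈ ε, n i) x') (hIter T (∑ i ∈ ε, n i) y') < δ

/-- `S` is a set of `d`-topological recurrence. -/
def TopRecSet (d : ℕ) (S : Set ℤ) : Prop :=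
  ∀ (X : Type) [MetricSpace X] [CompactSpace X] (T : X ≃ₜ X), MinimalTDS T →
    ∀ U : Set X, IsOpen U → U.Nonempty →
      ∃ n ∈ S, (⋂ j ∈ Finset.range (d + 1), hIter T ((j : ℤ) * n) ⁻¹' U).Nonempty

/-- `S` is a set of `d`-recurrence (measurable recurrence). -/
def MeasRecSet (d : ℕ) (S : Set ℤ) : Prop :=
  ∀ (Y : Type) [MeasurableSpace Y] [StandardBorelSpace Y]
    (μ : Measure Y) [IsProbabilityMeasure μ] (T : Y ≃ᵐ Y),
    MeasurePreserving (⇑T) μ μ →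
    ∀ A : Set Y, MeasurableSet A → 0 < μ A →
      ∃ n ∈ S, 0 < μ (⋂ j ∈ Finset.range (d + 1), zIter T.toEquiv ((j : ℤ) * n) ⁻¹' A)

/-- `P` is a Birkhoff recurrence set of order `d`. -/
def BirkhoffRecSet (d : ℕ) (P : Set ℤ) : Prop :=
  ∀ (X : Type) [MetricSpace X] [CompactSpace X] (T : X ≃ₜ X), MinimalTDS T →
    ∀ U : Set X, IsOpen U → U.Nonempty →
      ∃ n : Fin d → ℤ, FS n ⊆ P ∧ (U ∩ ⋂ m ∈ FS n, hIter T m ⁻¹' U).Nonempty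

/-- `F` is a Poincaré recurrence set of order `d`. -/
def PoincareRecSet (d : ℕ) (F : Set ℤ) : Prop :=
  ∀ (Y : Type) [MeasurableSpace Y] [StandardBorelSpace Y]
    (μ : Measure Y) [IsProbabilityMeasure μ] (T : Y ≃ᵐ Y),
    MeasurePreserving (⇑T) μ μ →
    ∀ A : Set Y, MeasurableSet A → 0 < μ A →
      ∃ n : Fin d → ℤ, FS n ⊆ F ∧ 0 < μ (A ∩ ⋂ m ∈ FS n, zIter T.toEquiv m ⁻¹' A)

/-- The upper unitriangular matrix `M(a)` with entries `(M(a))_{i, i+k} = a i k`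
(1-based indexing). -/
def Mmat (d : ℕ) (a : ℕ → ℕ → ℝ) : Matrix (Fin (d + 1)) (Fin (d + 1)) ℝ :=
  fun r c =>
    if (r : ℕ) = (c : ℕ) then 1
    else if (r : ℕ) < (c : ℕ) then a ((r : ℕ) + 1) ((c : ℕ) - (r : ℕ)) else 0

/-- `P_ℓ(a; i, k) = ∑ a_i^{s₁} a_{i+s₁}^{s₂} ⋯`, sum over `(s₁,…,s_ℓ) ∈ {1,…,k}^ℓ`
with `s₁ + ⋯ + s_ℓ = k`. -/
def Ppoly (a : ℕ → ℕ → ℝ) (i k ℓ : ℕ) : ℝ :=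
  ∑ s ∈ Finset.univ.filter (fun s : Fin ℓ → Fin k => (∑ t, ((s t : ℕ) + 1)) = k),
    ∏ t : Fin ℓ,
      a (i + ∑ u ∈ Finset.univ.filter (fun u : Fin ℓ => u < t), ((s u : ℕ) + 1))
        ((s t : ℕ) + 1)

/-- The upper unitriangular matrix with superdiagonal `α₁, …, α_d` (1-based). -/
def Amat (d : ℕ) (α : ℕ → ℝ) : Matrix (Fin (d + 1)) (Fin (d + 1)) ℝ :=
  fun r c =>
    if (r : ℕ) = (c : ℕ) then 1
    else if (c : ℕ) = (r : ℕ) + 1 then α ((r : ℕ) + 1) else 0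

end

open Submodule

lemma nearInt_eq_of_abs_sub_lt_half {x : ℝ} {m : ℤ} (h : |x - m| < 1 / 2) : nearInt x = m := by
  rw [abs_lt] at h
  unfold nearInt
  rcases le_or_gt (m : ℝ) x with hmx | hxm
  · have hfloor : ⌊x⌋ = m := Int.floor_eq_iff.2 ⟨hmx, by linarith⟩
    rw [if_pos (by rw [hfloor]; linarith), hfloor]
  · have hfloor : ⌊x⌋ = m - 1 := Int.floor_eq_iff.2 ⟨by push_cast; linarith, by push_cast; linarith⟩
    rw [if_neg (by rw [hfloor]; push_cast; linarith)]
    exact Int.ceil_eq_iff.2 ⟨by linarith, hxm.le⟩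

lemma nearInt_intCast (m : ℤ) : nearInt m = m :=
  nearInt_eq_of_abs_sub_lt_half (by norm_num)

noncomputable def nearIntFn {α : Type*} (F : α → ℝ) : α → ℝ := fun n => nearInt (F n)

lemma nearIntFn_prod_nearIntFn {α ι : Type*} (s : Finset ι) (F : ι → α → ℝ) :
    nearIntFn (∏ i ∈ s, nearIntFn (F i)) = ∏ i ∈ s, nearIntFn (F i) := by
  funext n
  simp only [nearIntFn, Finset.prod_apply, ← Int.cast_prod, nearInt_intCast]

lemma nearIntFn_mul_nearIntFn {α : Type*} (F G : α → ℝ) :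
    nearIntFn (nearIntFn F * nearIntFn G) = nearIntFn F * nearIntFn G := by
  funext n
  simp only [nearIntFn, Pi.mul_apply, ← Int.cast_mul, nearInt_intCast]

def tendstoZeroSubmodule {α : Type*} (R : Type*) {M : Type*} [Semiring R] [AddCommMonoid M]
    [Module R M] [TopologicalSpace M] [ContinuousAdd M] [ContinuousConstSMul R M]
    (l : Filter α) : Submodule R (α → M) where
  carrier := {f | Tendsto f l (𝓝 0)}
  add_mem' hf hg := by rw [← add_zero (0 : M)]; exact hf.add hg
  zero_mem' := tendsto_const_nhds
  smul_mem' c f hf := by rw [← smul_zero c]; exact hf.const_smul c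

lemma eventually_nearIntFn_eq {α : Type*} {l : Filter α} {F z : α → ℝ}
    (hz : ∀ n, ∃ m : ℤ, z n = m) (h : Tendsto (F - z) l (𝓝 0)) : nearIntFn F =ᶠ[l] z := by
  filter_upwards [((tendsto_zero_iff_abs_tendsto_zero _).1 h).eventually
    (gt_mem_nhds (by norm_num : (0 : ℝ) < 1 / 2))] with n hn
  obtain ⟨m, hm⟩ := hz n
  simp only [Function.comp_apply, Pi.sub_apply, hm] at hn
  rw [hm]
  exact congrArg _ (nearInt_eq_of_abs_sub_lt_half hn)

/-- The family `F_{SGP_d}`. -/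
def sgpFilter (d : ℕ) : Filter ℤ :=
  generate {S | ∃ Q, SGP d Q ∧ ∃ δ > 0, S = {n | distInt (Q n) < δ}}

lemma tendsto_sub_nearIntFn_sgpFilter {d : ℕ} {Q : ℤ → ℝ} (hQ : SGP d Q) :
    Tendsto (Q - nearIntFn Q) (sgpFilter d) (𝓝 0) := by
  rw [tendsto_zero_iff_abs_tendsto_zero]
  exact tendsto_order.2 ⟨fun a ha => Eventually.of_forall fun n => ha.trans_le (abs_nonneg _),
    fun δ hδ => mem_generate_of_mem ⟨Q, hQ, δ, hδ, rfl⟩⟩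

lemma exists_iInter_subset_of_mem_sgpFilter {d : ℕ} {U : Set ℤ} (hU : U ∈ sgpFilter d) :
    ∃ (m : ℕ) (Q : Fin m → ℤ → ℝ) (δ : Fin m → ℝ), (∀ j, SGP d (Q j)) ∧ (∀ j, 0 < δ j) ∧
      (⋂ j, {n : ℤ | distInt (Q j n) < δ j}) ⊆ U := by
  obtain ⟨t, hts, htfin, htU⟩ := mem_generate_iff.1 hU
  have := htfin.to_subtype
  obtain ⟨m, ⟨σ⟩⟩ := Finite.exists_equiv_fin t
  choose Q hQ δ hδ hS using fun j => hts (σ.symm j).2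
  refine ⟨m, Q, δ, hQ, hδ, fun n hn => htU fun S hSt => ?_⟩
  have hσ := hS (σ ⟨S, hSt⟩)
  simp only [Equiv.symm_apply_apply] at hσ
  rw [hσ]
  exact Set.mem_iInter.1 hn _

/-- `L(a₁n^{j₁}, …, a_ℓn^{j_ℓ})` with all `jₜ ≥ 1` and `∑ jₜ ≤ e`, unfolded along `L`. -/
inductive IsBracketMonomial : ℕ → (ℤ → ℝ) → Prop
  | monomial {e j : ℕ} (a : ℝ) (hj : 1 ≤ j) (hje : j ≤ e) :
      IsBracketMonomial e (fun n => (n : ℝ) ^ j * a)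
  | mul_nearInt {e e' j : ℕ} (a : ℝ) {T : ℤ → ℝ} (hj : 1 ≤ j) (hje : j + e' ≤ e)
      (hT : IsBracketMonomial e' T) :
      IsBracketMonomial e (fun n => (n : ℝ) ^ j * a * nearInt (T n))

namespace IsBracketMonomial

variable {e e' : ℕ} {Q : ℤ → ℝ}

lemma mono (hQ : IsBracketMonomial e Q) (h : e ≤ e') : IsBracketMonomial e' Q := by
  cases hQ with
  | monomial a hj hje => exact monomial a hj (hje.trans h)
  | mul_nearInt a hj hje hT => exact mul_nearInt a hj (hje.trans h) hT

lemma smul (hQ : IsBracketMonomial e Q) (c : ℝ) : IsBracketMonomial e (c • Q) := by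
  cases hQ with
  | monomial a hj hje =>
    convert monomial (c * a) hj hje using 1
    funext n; simp only [Pi.smul_apply, smul_eq_mul]; ring
  | mul_nearInt a hj hje hT =>
    convert mul_nearInt (c * a) hj hje hT using 1
    funext n; simp only [Pi.smul_apply, smul_eq_mul]; ring

lemma monomial_mul (hQ : IsBracketMonomial e Q) {j : ℕ} (hj : 1 ≤ j) (b : ℝ) :
    IsBracketMonomial (j + e) (fun n => (n : ℝ) ^ j * b * Q n) := by
  cases hQ with
  | @monomial _ j' a _ hje =>
    convert monomial (e := j + e) (j := j + j') (b * a) (le_add_right hj) (by omega) using 1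
    funext n; ring
  | @mul_nearInt _ e₀ j' a _ _ hje hT =>
    convert mul_nearInt (e := j + e) (j := j + j') (b * a) (le_add_right hj) (by omega) hT using 1
    funext n; ring

lemma sgp (hQ : IsBracketMonomial e Q) : SGP e Q := by
  induction hQ with
  | @monomial e j a hj hje =>
    exact ⟨1, le_rfl, ![a], ![j], fun _ => by simpa using hj, by simpa using hje, rfl⟩
  | @mul_nearInt e e' j a _ hj hje _ ih =>
    obtain ⟨ℓ, hℓ, b, i, hi, hsum, rfl⟩ := ih
    refine ⟨ℓ + 1, le_add_self, Fin.cons a b, Fin.cons j i, Fin.cases hj hi, ?_, ?_⟩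
    · rw [Fin.sum_univ_succ]; simp only [Fin.cons_zero, Fin.cons_succ]; omega
    · funext n
      obtain ⟨ℓ, rfl⟩ := Nat.exists_eq_add_of_le' hℓ
      simp only [List.ofFn_succ, Fin.cons_zero, Fin.cons_succ, Lfun]

end IsBracketMonomial

def roundedSpan (e : ℕ) : Submodule ℤ (ℤ → ℝ) :=
  span ℤ (nearIntFn '' {Q | IsBracketMonomial e Q})

def approxSpace (d e : ℕ) : Submodule ℝ (ℤ → ℝ) :=
  span ℝ {Q | IsBracketMonomial e Q} ⊔ tendstoZeroSubmodule ℝ (sgpFilter d)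

section approxSpace

variable {d e e' : ℕ} {F G Q Q' z z' : ℤ → ℝ}

lemma IsBracketMonomial.tendsto_sub_nearIntFn (hQ : IsBracketMonomial e Q) (he : e ≤ d) :
    Tendsto (Q - nearIntFn Q) (sgpFilter d) (𝓝 0) :=
  tendsto_sub_nearIntFn_sgpFilter (hQ.mono he).sgp

lemma IsBracketMonomial.mem_approxSpace (hQ : IsBracketMonomial e Q) : Q ∈ approxSpace d e :=
  mem_sup_left (subset_span hQ)

lemma mem_approxSpace_of_tendsto (h : Tendsto F (sgpFilter d) (𝓝 0)) : F ∈ approxSpace d e :=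
  mem_sup_right h

lemma approxSpace_mono (h : e ≤ e') : approxSpace d e ≤ approxSpace d e' :=
  sup_le_sup_right (span_mono fun _ hQ => IsBracketMonomial.mono hQ h) _

lemma mem_approxSpace_of_eventuallyEq (hG : G ∈ approxSpace d e) (h : F =ᶠ[sgpFilter d] G) :
    F ∈ approxSpace d e := by
  have hFG : F - G ∈ approxSpace d e :=
    mem_approxSpace_of_tendsto (tendsto_const_nhds.congr' h.sub_eq.symm)
  simpa using add_mem hFG hG

lemma exists_intCast_eq_of_mem_roundedSpan (hz : z ∈ roundedSpan e) (n : ℤ) :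
    ∃ m : ℤ, z n = m := by
  induction hz using span_induction with
  | mem x hx =>
    obtain ⟨Q, -, rfl⟩ := hx
    exact ⟨nearInt (Q n), rfl⟩
  | zero => exact ⟨0, by simp⟩
  | add x y _ _ hx hy =>
    obtain ⟨a, ha⟩ := hx
    obtain ⟨b, hb⟩ := hy
    exact ⟨a + b, by simp [ha, hb]⟩
  | smul k x _ hx =>
    obtain ⟨a, ha⟩ := hx
    exact ⟨k * a, by simp [ha]⟩

lemma mem_approxSpace_of_mem_roundedSpan (hz : z ∈ roundedSpan e) (he : e ≤ d) :
    z ∈ approxSpace d e := by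
  induction hz using span_induction with
  | mem x hx =>
    obtain ⟨Q, hQ, rfl⟩ := hx
    simpa using sub_mem hQ.mem_approxSpace
      (mem_approxSpace_of_tendsto (e := e) (hQ.tendsto_sub_nearIntFn he))
  | zero => exact zero_mem _
  | add x y _ _ hx hy => exact add_mem hx hy
  | smul k x _ hx => rw [← Int.cast_smul_eq_zsmul ℝ]; exact smul_mem _ _ hx

lemma exists_roundedSpan_tendsto_sub (hF : F ∈ approxSpace d e) (he : e ≤ d) :
    ∃ z ∈ roundedSpan e, Tendsto (F - z) (sgpFilter d) (𝓝 0) := by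
  obtain ⟨g, hg, h, hh, rfl⟩ := mem_sup.1 hF
  clear hF
  have hgz : ∃ z ∈ roundedSpan e, Tendsto (g - z) (sgpFilter d) (𝓝 0) := by
    induction hg using Submodule.closure_induction with
    | zero => exact ⟨0, zero_mem _, by rw [sub_zero]; exact tendsto_const_nhds⟩
    | add x y _ _ hx hy =>
      obtain ⟨zx, hzx, hx⟩ := hx
      obtain ⟨zy, hzy, hy⟩ := hy
      refine ⟨zx + zy, add_mem hzx hzy, ?_⟩
      rw [add_sub_add_comm, ← add_zero (0 : ℝ)]
      exact hx.add hy
    | smul_mem r Q hQ =>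
      exact ⟨nearIntFn (r • Q), subset_span ⟨_, hQ.smul r, rfl⟩,
        (hQ.smul r).tendsto_sub_nearIntFn he⟩
  obtain ⟨z, hz, hgz⟩ := hgz
  refine ⟨z, hz, ?_⟩
  rw [show g + h - z = g - z + h by abel, ← add_zero (0 : ℝ)]
  exact hgz.add hh

lemma nearIntFn_mem_approxSpace (hF : F ∈ approxSpace d e) (he : e ≤ d) :
    nearIntFn F ∈ approxSpace d e := by
  obtain ⟨z, hz, h⟩ := exists_roundedSpan_tendsto_sub hF he
  exact mem_approxSpace_of_eventuallyEq (mem_approxSpace_of_mem_roundedSpan hz he)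
    (eventually_nearIntFn_eq (exists_intCast_eq_of_mem_roundedSpan hz) h)

lemma monomial_mul_mem_span_of_mem_roundedSpan (hz : z ∈ roundedSpan e) {j : ℕ} (hj : 1 ≤ j)
    (b : ℝ) : (fun n : ℤ => (n : ℝ) ^ j * b * z n) ∈ span ℝ {Q | IsBracketMonomial (j + e) Q} := by
  induction hz using span_induction with
  | mem x hx =>
    obtain ⟨Q, hQ, rfl⟩ := hx
    exact subset_span (IsBracketMonomial.mul_nearInt b hj le_rfl hQ)
  | zero =>
    convert (span ℝ _).zero_mem using 1
    funext n; simp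
  | add x y _ _ hx hy =>
    convert add_mem hx hy using 1
    funext n; simp only [Pi.add_apply]; ring
  | smul k x _ hx =>
    convert smul_mem _ (k : ℝ) hx using 1
    funext n; simp only [Pi.smul_apply, zsmul_eq_mul, smul_eq_mul]; ring

lemma monomial_mul_nearIntFn_mem_approxSpace (hF : F ∈ approxSpace d e) (he : e ≤ d) (j : ℕ)
    (b : ℝ) : (fun n : ℤ => (n : ℝ) ^ j * b * nearIntFn F n) ∈ approxSpace d (j + e) := by
  rcases Nat.eq_zero_or_pos j with rfl | hj
  · rw [zero_add]
    convert smul_mem _ b (nearIntFn_mem_approxSpace hF he) using 1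
    funext n; simp
  · obtain ⟨z, hz, h⟩ := exists_roundedSpan_tendsto_sub hF he
    refine mem_approxSpace_of_eventuallyEq
      (mem_sup_left (monomial_mul_mem_span_of_mem_roundedSpan hz hj b)) ?_
    filter_upwards [eventually_nearIntFn_eq (exists_intCast_eq_of_mem_roundedSpan hz) h]
      with n hn
    rw [hn]

lemma IsBracketMonomial.mul_nearIntFn_mem_approxSpace (hQ : IsBracketMonomial e Q)
    (hQ' : IsBracketMonomial e' Q') (hd : e + e' ≤ d)
    (ih : ∀ e₀ < e, ∀ {T}, IsBracketMonomial e₀ T →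
      nearIntFn T * nearIntFn Q' ∈ approxSpace d (e₀ + e')) :
    Q * nearIntFn Q' ∈ approxSpace d (e + e') := by
  cases hQ with
  | monomial a hj hje => exact (mul_nearInt a hj (by omega) hQ').mem_approxSpace
  | @mul_nearInt _ e₀ j a T hj hje hT =>
    have h := monomial_mul_nearIntFn_mem_approxSpace (ih e₀ (by omega) hT) (by omega) j a
    rw [nearIntFn_mul_nearIntFn] at h
    refine approxSpace_mono (e := j + (e₀ + e')) (by omega) ?_
    convert h using 1
    funext n; simp only [Pi.mul_apply, nearIntFn]; ring

lemma IsBracketMonomial.mul_mem_approxSpace (hQ : IsBracketMonomial e Q)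
    (hQ' : IsBracketMonomial e' Q') (hd : e + e' ≤ d)
    (ih : ∀ e₀ e₀', e₀ + e₀' < e + e' → ∀ {T T'}, IsBracketMonomial e₀ T →
      IsBracketMonomial e₀' T' → nearIntFn T * nearIntFn T' ∈ approxSpace d (e₀ + e₀')) :
    Q * Q' ∈ approxSpace d (e + e') := by
  cases hQ with
  | @monomial _ j a hj hje =>
    exact approxSpace_mono (by omega) (hQ'.monomial_mul hj a).mem_approxSpace
  | @mul_nearInt _ e₀ j a T hj hje hT =>
    cases hQ' with
    | @monomial _ j' b hj' hje' =>
      refine approxSpace_mono (e := j' + e) (by omega) ?_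
      convert ((mul_nearInt a hj hje hT).monomial_mul hj' b).mem_approxSpace using 1
      funext n; simp only [Pi.mul_apply]; ring
    | @mul_nearInt _ e₀' j' b T' hj' hje' hT' =>
      have h := monomial_mul_nearIntFn_mem_approxSpace (ih e₀ e₀' (by omega) hT hT')
        (by omega) (j + j') (a * b)
      rw [nearIntFn_mul_nearIntFn] at h
      refine approxSpace_mono (e := j + j' + (e₀ + e₀')) (by omega) ?_
      convert h using 1
      funext n; simp only [Pi.mul_apply, nearIntFn]; ring

theorem IsBracketMonomial.nearIntFn_mul_mem_approxSpace (hQ : IsBracketMonomial e Q)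
    (hQ' : IsBracketMonomial e' Q') (hd : e + e' ≤ d) :
    nearIntFn Q * nearIntFn Q' ∈ approxSpace d (e + e') := by
  induction hN : e + e' using Nat.strong_induction_on generalizing e e' Q Q' with
  | _ N ih =>
  subst hN
  have ih' : ∀ e₀ e₀', e₀ + e₀' < e + e' → ∀ {T T'}, IsBracketMonomial e₀ T →
      IsBracketMonomial e₀' T' → nearIntFn T * nearIntFn T' ∈ approxSpace d (e₀ + e₀') :=
    fun e₀ e₀' hlt _ _ hT hT' => ih _ hlt hT hT' (by omega) rfl
  have hx := hQ.mul_nearIntFn_mem_approxSpace hQ' hd fun e₀ he₀ _ hT => ih' _ _ (by omega) hT hQ'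
  have hy := hQ'.mul_nearIntFn_mem_approxSpace hQ (by omega) fun e₀ he₀ _ hT =>
    ih' _ _ (by omega) hT hQ
  rw [add_comm e'] at hy
  have herr : Tendsto ((Q - nearIntFn Q) * (Q' - nearIntFn Q')) (sgpFilter d) (𝓝 0) := by
    rw [← mul_zero (0 : ℝ)]
    exact (hQ.tendsto_sub_nearIntFn (by omega)).mul (hQ'.tendsto_sub_nearIntFn (by omega))
  rw [show nearIntFn Q * nearIntFn Q' = Q * nearIntFn Q' + Q' * nearIntFn Q - Q * Q' +
    (Q - nearIntFn Q) * (Q' - nearIntFn Q') by ring]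
  exact add_mem (sub_mem (add_mem hx hy) (hQ.mul_mem_approxSpace hQ' hd ih'))
    (mem_approxSpace_of_tendsto herr)

lemma mul_mem_approxSpace_of_mem_roundedSpan (hz : z ∈ roundedSpan e) (hz' : z' ∈ roundedSpan e')
    (hd : e + e' ≤ d) : z * z' ∈ approxSpace d (e + e') := by
  induction hz using span_induction with
  | mem x hx =>
    obtain ⟨Q, hQ, rfl⟩ := hx
    induction hz' using span_induction with
    | mem y hy =>
      obtain ⟨Q', hQ', rfl⟩ := hy
      exact hQ.nearIntFn_mul_mem_approxSpace hQ' hd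
    | zero => simp
    | add y y' _ _ hy hy' => rw [mul_add]; exact add_mem hy hy'
    | smul k y _ hy => rw [mul_smul_comm, ← Int.cast_smul_eq_zsmul ℝ]; exact smul_mem _ _ hy
  | zero => simp
  | add x x' _ _ hx hx' => rw [add_mul]; exact add_mem hx hx'
  | smul k x _ hx => rw [smul_mul_assoc, ← Int.cast_smul_eq_zsmul ℝ]; exact smul_mem _ _ hx

lemma nearIntFn_mul_mem_approxSpace (hF : F ∈ approxSpace d e) (hG : G ∈ approxSpace d e')
    (hd : e + e' ≤ d) : nearIntFn F * nearIntFn G ∈ approxSpace d (e + e') := by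
  obtain ⟨z, hz, hFz⟩ := exists_roundedSpan_tendsto_sub hF (by omega)
  obtain ⟨z', hz', hGz⟩ := exists_roundedSpan_tendsto_sub hG (by omega)
  exact mem_approxSpace_of_eventuallyEq (mul_mem_approxSpace_of_mem_roundedSpan hz hz' hd)
    ((eventually_nearIntFn_eq (exists_intCast_eq_of_mem_roundedSpan hz) hFz).mul
      (eventually_nearIntFn_eq (exists_intCast_eq_of_mem_roundedSpan hz') hGz))

lemma prod_nearIntFn_mem_approxSpace {k : ℕ} {f : Fin (k + 1) → ℤ → ℝ} {p : Fin (k + 1) → ℕ}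
    (hf : ∀ l, f l ∈ approxSpace d (p l)) (hp : ∑ l, p l ≤ d) :
    ∏ l, nearIntFn (f l) ∈ approxSpace d (∑ l, p l) := by
  induction k with
  | zero => simpa using nearIntFn_mem_approxSpace (hf 0) (by simpa using hp)
  | succ k ih =>
    rw [Fin.sum_univ_succ] at hp ⊢
    rw [Fin.prod_univ_succ, ← nearIntFn_prod_nearIntFn]
    exact nearIntFn_mul_mem_approxSpace (hf 0) (ih (fun l => hf l.succ) (by omega)) hp

theorem GP.mem_approxSpace {f : ℤ → ℝ} (hf : GP e f) (he : e ≤ d) : f ∈ approxSpace d e := by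
  induction hf with
  | lin a =>
    convert (IsBracketMonomial.monomial (e := 1) a le_rfl le_rfl).mem_approxSpace using 1
    funext n; ring
  | @mono d₀ hd₀ a₀ p₀ k p f _ hsum ih =>
    cases k with
    | zero =>
      simp only [Finset.univ_eq_empty, Finset.sum_empty, add_zero] at hsum
      subst hsum
      convert (IsBracketMonomial.monomial a₀ hd₀ le_rfl).mem_approxSpace using 1
      funext n; simp [mul_comm]
    | succ k =>
      have hp : ∀ l, p l ≤ ∑ l, p l := fun l => Finset.single_le_sum (by simp) (Finset.mem_univ l)
      have h := monomial_mul_nearIntFn_mem_approxSpace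
        (prod_nearIntFn_mem_approxSpace (fun l => ih l ((hp l).trans (by omega))) (by omega))
        (by omega) p₀ a₀
      rw [nearIntFn_prod_nearIntFn, hsum] at h
      convert h using 1
      funext n; simp only [Finset.prod_apply, nearIntFn]; ring
  | incl hed _ ih => exact approxSpace_mono hed.le (ih (by omega))
  | ceil _ ih => exact nearIntFn_mem_approxSpace (ih he) he
  | smul c _ ih => exact smul_mem _ c (ih he)
  | add _ _ ihf ihg => exact add_mem (ihf he) (ihg he)

theorem GP.eventually_distInt_lt {P : ℤ → ℝ} (hP : GP d P) {ε : ℝ} (hε : 0 < ε) :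
    ∀ᶠ n in sgpFilter d, distInt (P n) < ε := by
  obtain ⟨z, hz, h⟩ := exists_roundedSpan_tendsto_sub (hP.mem_approxSpace le_rfl) le_rfl
  filter_upwards [eventually_nearIntFn_eq (exists_intCast_eq_of_mem_roundedSpan hz) h,
    ((tendsto_zero_iff_abs_tendsto_zero _).1 h).eventually (gt_mem_nhds hε)] with n hround hclose
  change |P n - nearIntFn P n| < ε
  rwa [hround]

end approxSpace

theorem statement0_general (d : ℕ) (k : ℕ) (P : Fin k → ℤ → ℝ)
    (hP : ∀ i, GP d (P i)) (ε : Fin k → ℝ) (hε : ∀ i, 0 < ε i) :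
    ∃ (m : ℕ) (Q : Fin m → ℤ → ℝ) (δ : Fin m → ℝ),
      (∀ j, SGP d (Q j)) ∧ (∀ j, 0 < δ j) ∧
      (⋂ j, {n : ℤ | distInt (Q j n) < δ j}) ⊆ ⋂ i, {n : ℤ | distInt (P i n) < ε i} :=
  exists_iInter_subset_of_mem_sgpFilter
    (iInter_mem.2 fun i => (hP i).eventually_distInt_lt (hε i))

/-- Theorem `F_{GP_d} = F_{SGP_d}`: every basic `F_{GP_d}` set contains a basic
`F_{SGP_d}` set. -/
theorem statement0 (d : ℕ) (hd : 1 ≤ d) (k : ℕ) (P : Fin k → ℤ → ℝ)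
    (hP : ∀ i, GP d (P i)) (ε : Fin k → ℝ) (hε : ∀ i, 0 < ε i) :
    ∃ (m : ℕ) (Q : Fin m → ℤ → ℝ) (δ : Fin m → ℝ),
      (∀ j, SGP d (Q j)) ∧ (∀ j, 0 < δ j) ∧
      (⋂ j, {n : ℤ | distInt (Q j n) < δ j}) ⊆ ⋂ i, {n : ℤ | distInt (P i n) < ε i} :=
  statement0_general d k P hP ε hε
end

section
/- Let d ≥ 1 and let a = (a_i^k)_{1≤k≤d, 1≤i≤d−k+1} be real numbers. For 1 ≤ k ≤ d, 1 ≤ i ≤ d−k+1 and 1 ≤ ℓ ≤ k set P_ℓ(a;i,k) = Σ a_i^{s_1} a_{i+s_1}^{s_2} a_{i+s_1+s_2}^{s_3} ⋯ a_{i+s_1+⋯+s_{ℓ−1}}^{s_ℓ}, the sum ranging over all (s_1,…,s_ℓ) ∈ {1,…,k}^ℓ with s_1 + ⋯ + s_ℓ = k. Then for every n ∈ ℕ, every 1 ≤ k ≤ d and every 1 ≤ i ≤ d−k+1, the (i, i+k) entry of the matrix power M(a)^n equals C(n,1)·P_1(a;i,k) + C(n,2)·P_2(a;i,k) + ⋯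 + C(n,k)·P_k(a;i,k), where C(n,ℓ) denotes the binomial coefficient n(n−1)⋯(n−ℓ+1)/ℓ!. -/
open scoped Classical
open MeasureTheory Filter Topology

noncomputable section AuxStuff

/-- Path sums: sum over tuples of positive steps starting at row `r`, total reaching `c`. -/
def Cs (a : ℕ → ℕ → ℝ) (r c l K : ℕ) : ℝ :=
  ∑ s ∈ Finset.univ.filter (fun s : Fin l → Fin K => r + ∑ t, ((s t : ℕ) + 1) = c),
    ∏ t : Fin l,
      a (r + 1 + ∑ u ∈ Finset.univ.filter (fun u : Fin l => u < t), ((s u : ℕ) + 1))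
        ((s t : ℕ) + 1)

def Nmat (d : ℕ) (a : ℕ → ℕ → ℝ) : Matrix (Fin (d + 1)) (Fin (d + 1)) ℝ :=
  fun r c => if (r : ℕ) < (c : ℕ) then a ((r : ℕ) + 1) ((c : ℕ) - (r : ℕ)) else 0

lemma Cs_eq_zero_of_lt (a : ℕ → ℕ → ℝ) (r c l K : ℕ) (h : c < r + l) :
    Cs a r c l K = 0 := by
  rw [Cs]
  apply Finset.sum_eq_zero
  intro s hs
  rw [Finset.mem_filter] at hs
  exfalso
  have hge : l ≤ ∑ t, ((s t : ℕ) + 1) := by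
    calc l = ∑ _t : Fin l, 1 := by simp
    _ ≤ ∑ t, ((s t : ℕ) + 1) := Finset.sum_le_sum (fun t _ => by omega)
  omega

lemma Cs_zero_apply (a : ℕ → ℕ → ℝ) (r c K : ℕ) :
    Cs a r c 0 K = if r = c then 1 else 0 := by
  rw [Cs]
  rcases eq_or_ne r c with h | h <;> simp [h]

lemma sum_filter_lt_succ {l : ℕ} (t : Fin l) (g : Fin (l + 1) → ℕ) :
    ∑ u ∈ Finset.univ.filter (fun u : Fin (l+1) => u < Fin.succ t), g u
      = g 0 + ∑ u ∈ Finset.univ.filter (fun u : Fin l => u < t), g (Fin.succ u) := by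
  rw [Finset.sum_filter, Finset.sum_filter, Fin.sum_univ_succ]
  simp [Fin.succ_lt_succ_iff, Fin.succ_pos]

lemma Cs_succ (a : ℕ → ℕ → ℝ) (r c l K : ℕ) :
    Cs a r c (l + 1) K
      = ∑ s₀ : Fin K, a (r + 1) ((s₀ : ℕ) + 1) * Cs a (r + ((s₀ : ℕ) + 1)) c l K := by
  have hcons : ∀ (x : Fin K) (f : Fin l → Fin K),
      (Fin.consEquiv (fun _ : Fin (l+1) => Fin K)) (x, f) = Fin.cons x f := fun _ _ => rfl
  rw [Cs, Finset.sum_filter, ← Equiv.sum_comp (Fin.consEquiv (fun _ : Fin (l+1) => Fin K)),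
    Fintype.sum_prod_type]
  refine Finset.sum_congr rfl fun s₀ _ => ?_
  rw [Cs, Finset.sum_filter, Finset.mul_sum]
  refine Finset.sum_congr rfl fun s' _ => ?_
  rw [mul_ite, mul_zero]
  simp only [hcons]
  refine if_congr ?_ ?_ rfl
  · rw [Fin.sum_univ_succ, Fin.cons_zero]
    simp only [Fin.cons_succ]
    omega
  · rw [Fin.prod_univ_succ, Fin.cons_zero]
    have h0 : (Finset.univ.filter (fun u : Fin (l+1) => u < (0 : Fin (l+1)))) = ∅ := by
      simp
    rw [h0, Finset.sum_empty, Nat.add_zero]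
    congr 1
    refine Finset.prod_congr rfl fun t _ => ?_
    rw [sum_filter_lt_succ t (fun u => ((Fin.cons (α := fun _ => Fin K) s₀ s' u : Fin K) : ℕ) + 1), Fin.cons_zero]
    simp only [Fin.cons_succ]
    congr 1
    omega

lemma Npow_apply (d : ℕ) (a : ℕ → ℕ → ℝ) (l : ℕ) :
    ∀ r c : Fin (d + 1), ((Nmat d a) ^ l) r c = Cs a (r : ℕ) (c : ℕ) l (d + 1) := by
  induction l with
  | zero =>
    intro r c
    rw [pow_zero, Matrix.one_apply, Cs_zero_apply]
    simp [Fin.ext_iff]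
  | succ l ih =>
    intro r c
    rw [pow_succ', Matrix.mul_apply]
    simp only [ih, Nmat]
    rw [Cs_succ]
    rw [Fin.sum_univ_eq_sum_range
      (fun m => (if (r:ℕ) < m then a ((r:ℕ)+1) (m - (r:ℕ)) else 0) * Cs a m (c:ℕ) l (d+1))]
    rw [Fin.sum_univ_eq_sum_range
      (fun m => a ((r:ℕ)+1) (m+1) * Cs a ((r:ℕ) + (m+1)) (c:ℕ) l (d+1))]
    set g : ℕ → ℝ := fun m =>
      if (r:ℕ) < m then a ((r:ℕ)+1) (m - (r:ℕ)) * Cs a m (c:ℕ) l (d+1) else 0 with hg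
    have hL : ∑ m ∈ Finset.range (d+1),
        (if (r:ℕ) < m then a ((r:ℕ)+1) (m - (r:ℕ)) else 0) * Cs a m (c:ℕ) l (d+1)
        = ∑ m ∈ Finset.range (d+1), g m := by
      refine Finset.sum_congr rfl fun m _ => ?_
      by_cases h : (r:ℕ) < m <;> simp [hg, h]
    rw [hL]
    have hR : ∑ m ∈ Finset.range (d+1),
        a ((r:ℕ)+1) (m+1) * Cs a ((r:ℕ) + (m+1)) (c:ℕ) l (d+1)
        = ∑ m ∈ Finset.range (d+1), g ((r:ℕ) + 1 + m) := by
      refine Finset.sum_congr rfl fun m _ => ?_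
      simp only [hg]
      rw [if_pos (by omega)]
      congr 2 <;> omega
    rw [hR]
    have hIco : ∑ m ∈ Finset.range (d+1), g ((r:ℕ)+1+m)
        = ∑ m ∈ Finset.Ico ((r:ℕ)+1) ((r:ℕ)+1+(d+1)), g m := by
      rw [Finset.sum_Ico_eq_sum_range]
      have hnm : (r:ℕ)+1+(d+1)-((r:ℕ)+1) = d+1 := by omega
      rw [hnm]
    rw [hIco]
    have hsub1 : ∑ m ∈ Finset.range (d+1), g m = ∑ m ∈ Finset.range ((r:ℕ)+1+(d+1)), g m := by
      apply Finset.sum_subset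
      · exact Finset.range_subset_range.2 (by omega)
      · intro m _ hm
        rw [Finset.mem_range, not_lt] at hm
        have hc := c.isLt
        simp only [hg]
        split
        · rw [Cs_eq_zero_of_lt a m (c:ℕ) l (d+1) (by omega), mul_zero]
        · rfl
    have hsub2 : ∑ m ∈ Finset.Ico ((r:ℕ)+1) ((r:ℕ)+1+(d+1)), g m
        = ∑ m ∈ Finset.range ((r:ℕ)+1+(d+1)), g m := by
      apply Finset.sum_subset
      · intro m hm
        rw [Finset.mem_Ico] at hm
        rw [Finset.mem_range]
        omega
      · intro m hm hm'
        rw [Finset.mem_range] at hm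
        rw [Finset.mem_Ico, not_and_or, not_le] at hm'
        simp only [hg]
        rw [if_neg (by omega)]
    rw [hsub1, hsub2]


lemma part_le {l K : ℕ} (s : Fin l → Fin K) (t : Fin l) :
    ((s t : ℕ) + 1) ≤ ∑ u, ((s u : ℕ) + 1) :=
  Finset.single_le_sum (f := fun u => ((s u : ℕ) + 1)) (fun u _ => Nat.zero_le _) (Finset.mem_univ t)

lemma Cs_bound (a : ℕ → ℕ → ℝ) (r c l K K' : ℕ) (hK : c ≤ r + K) (hK' : c ≤ r + K') :
    Cs a r c l K = Cs a r c l K' := by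
  rw [Cs, Cs]
  refine Finset.sum_bij'
    (fun s hs => fun t => (⟨(s t : ℕ), by
        have hmem := (Finset.mem_filter.mp hs).2
        have h1 := part_le s t
        omega⟩ : Fin K'))
    (fun s hs => fun t => (⟨(s t : ℕ), by
        have hmem := (Finset.mem_filter.mp hs).2
        have h1 := part_le s t
        omega⟩ : Fin K))
    ?_ ?_ ?_ ?_ ?_
  · intro s hs
    simp only [Finset.mem_filter, Finset.mem_univ, true_and] at hs ⊢
    exact hs
  · intro s hs
    simp only [Finset.mem_filter, Finset.mem_univ, true_and] at hs ⊢
    exact hs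
  · intro s hs
    funext t
    rfl
  · intro s hs
    funext t
    rfl
  · intro s hs
    rfl

lemma Ppoly_eq_Cs (a : ℕ → ℕ → ℝ) (i k l K : ℕ) (hi : 1 ≤ i) (hK : k ≤ K) :
    Ppoly a i k l = Cs a (i - 1) (i - 1 + k) l K := by
  rw [← Cs_bound a (i-1) (i-1+k) l k K (by omega) (by omega)]
  rw [Ppoly, Cs]
  refine Finset.sum_congr (Finset.filter_congr fun s _ => by
      constructor <;> intro h <;> omega)
    fun s hs => Finset.prod_congr rfl fun t _ => by congr 1; omega

end AuxStuff

/-- The entries of powers of an upper unitriangular matrix. -/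
theorem statement1 (d : ℕ) (hd : 1 ≤ d) (a : ℕ → ℕ → ℝ) (n : ℕ) (k i : ℕ)
    (hk1 : 1 ≤ k) (hkd : k ≤ d) (hi1 : 1 ≤ i) (hid : i ≤ d - k + 1) :
    (Mmat d a ^ n) ⟨i - 1, by omega⟩ ⟨i + k - 1, by omega⟩ =
      ∑ l ∈ Finset.Icc 1 k, (n.choose l : ℝ) * Ppoly a i k l := by
  have hc0 : i + k - 1 < d + 1 := by omega
  have hr0 : i - 1 < d + 1 := by omega
  have hM : Mmat d a = Nmat d a + 1 := by
    funext r c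
    simp only [Mmat, Nmat, Matrix.add_apply, Matrix.one_apply, Fin.ext_iff]
    by_cases h1 : (r : ℕ) = (c : ℕ)
    · rw [if_pos h1, if_neg (by omega), if_pos h1, zero_add]
    · rw [if_neg h1, if_neg h1, add_zero]
  rw [hM, (Commute.one_right (Nmat d a)).add_pow n, Matrix.sum_apply]
  have hterm : ∀ m,
      (Nmat d a ^ m * 1 ^ (n - m) * ((n.choose m : ℕ) : Matrix (Fin (d+1)) (Fin (d+1)) ℝ))
        ⟨i - 1, hr0⟩ ⟨i + k - 1, hc0⟩
      = (n.choose m : ℝ) * Cs a (i - 1) (i + k - 1) m (d + 1) := by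
    intro m
    rw [one_pow, mul_one, ← Matrix.diagonal_natCast, Matrix.mul_diagonal,
      Npow_apply d a m, mul_comm]
  have hCs : ∀ m, Cs a (i - 1) (i + k - 1) m (d + 1) = Cs a (i - 1) (i - 1 + k) m (d + 1) := by
    intro m
    congr 1
    omega
  have hF : ∀ m, (Nmat d a ^ m * 1 ^ (n - m) * ((n.choose m : ℕ) : Matrix (Fin (d+1)) (Fin (d+1)) ℝ))
        ⟨i - 1, hr0⟩ ⟨i + k - 1, hc0⟩
      = (n.choose m : ℝ) * Cs a (i - 1) (i - 1 + k) m (d + 1) := by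
    intro m
    rw [hterm m, hCs m]
  calc ∑ m ∈ Finset.range (n + 1),
        (Nmat d a ^ m * 1 ^ (n - m) * ((n.choose m : ℕ) : Matrix (Fin (d+1)) (Fin (d+1)) ℝ))
          ⟨i - 1, hr0⟩ ⟨i + k - 1, hc0⟩
      = ∑ m ∈ Finset.range (n + 1), (n.choose m : ℝ) * Cs a (i - 1) (i - 1 + k) m (d + 1) :=
        Finset.sum_congr rfl fun m _ => hF m
    _ = ∑ m ∈ Finset.range (max (n + 1) (k + 1)),
          (n.choose m : ℝ) * Cs a (i - 1) (i - 1 + k) m (d + 1) := by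
        apply Finset.sum_subset (Finset.range_subset_range.2 (by omega))
        intro m hm hm'
        rw [Finset.mem_range] at hm hm'
        rw [Nat.choose_eq_zero_of_lt (by omega), Nat.cast_zero, zero_mul]
    _ = ∑ m ∈ Finset.Icc 1 k, (n.choose m : ℝ) * Cs a (i - 1) (i - 1 + k) m (d + 1) := by
        symm
        apply Finset.sum_subset
        · intro m hm
          rw [Finset.mem_Icc] at hm
          rw [Finset.mem_range]
          omega
        · intro m hm hm'
          rw [Finset.mem_range] at hm
          rw [Finset.mem_Icc, not_and_or, not_le, not_le] at hm'
          rcases hm' with h | h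
          · interval_cases m
            rw [Cs_zero_apply, if_neg (by omega), mul_zero]
          · rw [Cs_eq_zero_of_lt a (i-1) (i-1+k) m (d+1) (by omega), mul_zero]
    _ = ∑ l ∈ Finset.Icc 1 k, (n.choose l : ℝ) * Ppoly a i k l :=
        Finset.sum_congr rfl fun m _ => by
          rw [Ppoly_eq_Cs a i k m (d+1) hi1 (by omega)]
end

section
/- Let d ≥ 1 be an integer and S ⊆ ℤ. The following statements are equivalent: (1) S is topologically d-intersective, i.e. for every syndetic set A ⊆ ℤ there exists n ∈ S such that A ∩ (A−n) ∩ (A−2n) ∩ ⋯ ∩ (A−dn) ≠ ∅; (2) S is a set of d-topological recurrence; (3) for every t.d.s. (X,T) there exist x ∈ X and a sequence (n_i) of elements of S such that for each 1 ≤ j ≤ d, T^{j n_i} x → x as i → ∞. -/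
open scoped Classical
open MeasureTheory Filter Topology

/-!
Multiple recurrence along `S` in minimal systems is, by Baire's theorem, the same as having a
point `x` with `T^{j n_i} x → x` (`1 ≤ j ≤ d`, `n_i ∈ S`): the points that return within `ε`
along some `n ∈ S` form a dense open set. Since every system contains a minimal subsystem, this
gives (2) ⇒ (3). Conversely, (3) applied to the orbit closure of `1_A` in the shift `ℤ → Bool`
produces a point whose `0`-coordinate is `1` and returns along `j n` for all `j ≤ d`; reading it
off as a limit of shifts of `1_A` gives (3) ⇒ (1). Finally (1) ⇒ (2) because return times of a
point to an open set in a minimal system are syndetic.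
-/

def TopIntersective (d : ℕ) (S : Set ℤ) : Prop :=
  ∀ A : Set ℤ, Syndetic A → ∃ n ∈ S, ∃ m : ℤ, ∀ j ∈ Finset.range (d + 1), m + (j : ℤ) * n ∈ A

def MultipleRecurrentAlong (d : ℕ) (S : Set ℤ) : Prop :=
  ∀ (X : Type) [MetricSpace X] [CompactSpace X] [Nonempty X] (T : X ≃ₜ X),
    ∃ (x : X) (ns : ℕ → ℤ), (∀ i, ns i ∈ S) ∧
      ∀ j : ℕ, 1 ≤ j → j ≤ d → Tendsto (fun i => hIter T ((j : ℤ) * ns i) x) atTop (𝓝 x)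

section Iterates

variable {X Y : Type*} [TopologicalSpace X] [TopologicalSpace Y] (T : X ≃ₜ X)

theorem hIter_eq_zpow (n : ℤ) : hIter T n = ⇑(T ^ n) := by
  induction n using Int.induction_on with
  | zero => rfl
  | succ k ih =>
    funext x
    simp only [hIter, zIter, zpow_add_one] at ih ⊢
    rw [Equiv.Perm.mul_apply, Homeomorph.mul_apply, ← ih]
    rfl
  | pred k ih =>
    funext x
    simp only [hIter, zIter, zpow_sub_one] at ih ⊢
    rw [Equiv.Perm.mul_apply, Homeomorph.mul_apply, ← ih]
    rfl

theorem hIter_zero (x : X) : hIter T 0 x = x := by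
  simp [hIter_eq_zpow]

theorem hIter_one (x : X) : hIter T 1 x = T x := by
  simp [hIter_eq_zpow]

theorem hIter_neg_one (x : X) : hIter T (-1) x = T.symm x := by
  simp [hIter_eq_zpow]

theorem hIter_add (m n : ℤ) (x : X) : hIter T (m + n) x = hIter T m (hIter T n x) := by
  simp [hIter_eq_zpow, zpow_add]

theorem hIter_comm (m n : ℤ) (x : X) : hIter T m (hIter T n x) = hIter T n (hIter T m x) := by
  rw [← hIter_add, add_comm, hIter_add]

theorem continuous_hIter (n : ℤ) : Continuous (hIter T n) := by
  rw [hIter_eq_zpow]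
  exact (T ^ n).continuous

theorem hIter_semiconj {S : Y ≃ₜ Y} {φ : Y → X} (h : ∀ y, φ (S y) = T (φ y)) (n : ℤ) (y : Y) :
    φ (hIter S n y) = hIter T n (φ y) := by
  have h_symm (y : Y) : φ (S.symm y) = T.symm (φ y) := by
    rw [T.eq_symm_apply, ← h, S.apply_symm_apply]
  induction n using Int.induction_on generalizing y with
  | zero => simp only [hIter_zero]
  | succ k ih => rw [hIter_add, hIter_one, ih, h, hIter_add, hIter_one]
  | pred k ih => rw [sub_eq_add_neg, hIter_add, hIter_neg_one, ih, h_symm, hIter_add, hIter_neg_one]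

theorem hIter_sets_val {M : Set X} (hM : M = T ⁻¹' M) (n : ℤ) (y : M) :
    ((hIter (T.sets hM) n y : M) : X) = hIter T n y :=
  hIter_semiconj T (S := T.sets hM) (φ := Subtype.val) (fun _ => rfl) n y

theorem tendsto_hIter_hIter {ι : Type*} {l : Filter ι} {ns : ι → ℤ} {x : X}
    (h : Tendsto (fun i => hIter T (ns i) x) l (𝓝 x)) (k : ℤ) :
    Tendsto (fun i => hIter T (ns i) (hIter T k x)) l (𝓝 (hIter T k x)) := by
  exact (((continuous_hIter T k).tendsto x).comp h).congr fun i => hIter_comm T k (ns i) x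

def orbitClosure (x : X) : Set X := closure (Set.range fun n => hIter T n x)

theorem mem_orbitClosure_self (x : X) : x ∈ orbitClosure T x :=
  subset_closure ⟨0, hIter_zero T x⟩

theorem preimage_orbitClosure (x : X) : T ⁻¹' orbitClosure T x = orbitClosure T x := by
  rw [orbitClosure, Homeomorph.preimage_closure]
  congr 1
  ext y
  constructor
  · rintro ⟨n, hn⟩
    refine ⟨-1 + n, ?_⟩
    simp only [hIter_add, hn, hIter_neg_one, Homeomorph.symm_apply_apply]
  · rintro ⟨n, rfl⟩
    exact ⟨1 + n, by simp only [hIter_add, hIter_one]⟩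

end Iterates

section MinimalSystems

variable {X : Type*} [TopologicalSpace X] (T : X ≃ₜ X)

def IsSubsystem (M : Set X) : Prop := M.Nonempty ∧ IsClosed M ∧ M = T ⁻¹' M

theorem exists_minimal_isSubsystem [CompactSpace X] {K : Set X} (hK : IsSubsystem T K) :
    ∃ M ⊆ K, Minimal (IsSubsystem T) M := by
  refine zorn_superset_nonempty _ (fun c hcS hchain hcne => ?_) K hK
  refine ⟨⋂₀ c, ⟨?_, ?_, ?_⟩, fun s hs => Set.sInter_subset_of_mem hs⟩
  · have := hcne.to_subtype
    exact IsCompact.nonempty_sInter_of_directed_nonempty_isCompact_isClosed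
      (fun s hs t ht => (hchain.total hs ht).elim (fun h => ⟨s, hs, subset_rfl, h⟩)
        (fun h => ⟨t, ht, h, subset_rfl⟩))
      (fun s hs => (hcS hs).1) (fun s hs => (hcS hs).2.1.isCompact) (fun s hs => (hcS hs).2.1)
  · exact isClosed_sInter fun s hs => (hcS hs).2.1
  · rw [Set.preimage_sInter]
    exact Set.sInter_eq_biInter.trans (Set.iInter₂_congr fun s hs => (hcS hs).2.2)

theorem minimalTDS_sets {M : Set X} (hM : Minimal (IsSubsystem T) M) :
    MinimalTDS (T.sets hM.prop.2.2) := by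
  intro x
  have h_orbit : Subtype.val '' Set.range (fun n => hIter (T.sets hM.prop.2.2) n x) =
      Set.range fun n => hIter T n (x : X) := by
    rw [← Set.range_comp]
    exact congrArg Set.range (funext fun n => hIter_sets_val T _ n x)
  have h_sub : orbitClosure T x ⊆ M := by
    refine hM.prop.2.1.closure_subset_iff.mpr ?_
    rw [← h_orbit]
    exact Subtype.coe_image_subset _ _
  have h_sub_closed : IsSubsystem T (orbitClosure T x) :=
    ⟨⟨x, mem_orbitClosure_self T x⟩, isClosed_closure, (preimage_orbitClosure T x).symm⟩
  rw [Subtype.dense_iff, h_orbit]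
  exact hM.le_of_le h_sub_closed h_sub

theorem syndetic_nset [CompactSpace X] (hT : MinimalTDS T) (x : X) {U : Set X} (hU : IsOpen U)
    (hne : U.Nonempty) : Syndetic (Nset T x U) := by
  have h_cover : Set.univ ⊆ ⋃ n : ℤ, hIter T n ⁻¹' U := fun y _ => by
    obtain ⟨_, ⟨n, rfl⟩, hn⟩ := (hT y).exists_mem_open hU hne
    exact Set.mem_iUnion.mpr ⟨n, hn⟩
  obtain ⟨t, ht⟩ := isCompact_univ.elim_finite_subcover _
    (fun n => (continuous_hIter T n).isOpen_preimage U hU) h_cover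
  set N := t.sup Int.natAbs
  refine ⟨2 * N, fun i => ?_⟩
  obtain ⟨m, hmt, hmU⟩ := Set.mem_iUnion₂.mp (ht (Set.mem_univ (hIter T (i + N) x)))
  have hm : m.natAbs ≤ N := Finset.le_sup (f := Int.natAbs) hmt
  refine ⟨m + (i + N), by omega, by push_cast; omega, ?_⟩
  rw [Nset, Set.mem_ofPred_eq, hIter_add]
  exact hmU

end MinimalSystems

section AlmostReturn

variable {X : Type*} [MetricSpace X] (T : X ≃ₜ X) (d : ℕ) (S : Set ℤ)

def almostReturnSet (ε : ℝ) : Set X :=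
  ⋃ n ∈ S, ⋂ j ∈ Finset.range (d + 1), {x | dist (hIter T ((j : ℤ) * n) x) x < ε}

theorem isOpen_almostReturnSet (ε : ℝ) : IsOpen (almostReturnSet T d S ε) :=
  isOpen_biUnion fun _ _ => isOpen_biInter_finset fun _ _ =>
    isOpen_lt ((continuous_hIter T _).dist continuous_id) continuous_const

end AlmostReturn

theorem dense_almostReturnSet {X : Type} [MetricSpace X] [CompactSpace X] {T : X ≃ₜ X}
    (hT : MinimalTDS T) {d : ℕ} {S : Set ℤ} (hS : TopRecSet d S) {ε : ℝ} (hε : 0 < ε) :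
    Dense (almostReturnSet T d S ε) := by
  refine dense_iff_inter_open.mpr fun V hV ⟨v, hv⟩ => ?_
  obtain ⟨n, hnS, y, hy⟩ := hS X T hT (V ∩ Metric.ball v (ε / 2))
    (hV.inter Metric.isOpen_ball) ⟨v, hv, Metric.mem_ball_self (half_pos hε)⟩
  have h_mem (j : ℕ) (hj : j ∈ Finset.range (d + 1)) :
      hIter T ((j : ℤ) * n) y ∈ V ∩ Metric.ball v (ε / 2) :=
    Set.mem_iInter₂.mp hy j hj
  have hyV : y ∈ V ∩ Metric.ball v (ε / 2) := by
    simpa [hIter_zero] using h_mem 0 (by simp)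
  refine ⟨y, hyV.1, Set.mem_biUnion hnS (Set.mem_iInter₂.mpr fun j hj => ?_)⟩
  calc dist (hIter T ((j : ℤ) * n) y) y
      ≤ dist (hIter T ((j : ℤ) * n) y) v + dist y v := dist_triangle_right _ _ _
    _ < ε / 2 + ε / 2 := add_lt_add (h_mem j hj).2 hyV.2
    _ = ε := add_halves ε

theorem exists_multiple_recurrent_point {X : Type} [MetricSpace X] [CompactSpace X] [Nonempty X]
    {T : X ≃ₜ X} (hT : MinimalTDS T) {d : ℕ} {S : Set ℤ} (hS : TopRecSet d S) :
    ∃ (x : X) (ns : ℕ → ℤ), (∀ i, ns i ∈ S) ∧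
      ∀ j ≤ d, Tendsto (fun i => hIter T ((j : ℤ) * ns i) x) atTop (𝓝 x) := by
  have h_dense : Dense (⋂ k : ℕ, almostReturnSet T d S (1 / (k + 1))) :=
    dense_iInter_of_isOpen_nat (fun _ => isOpen_almostReturnSet T d S _)
      (fun _ => dense_almostReturnSet hT hS (by positivity))
  obtain ⟨x, hx⟩ := h_dense.nonempty
  choose ns hnsS hns using fun k => Set.mem_iUnion₂.mp (Set.mem_iInter.mp hx k)
  refine ⟨x, ns, hnsS, fun j hj => tendsto_iff_dist_tendsto_zero.mpr ?_⟩
  exact squeeze_zero (fun _ => dist_nonneg)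
    (fun k => (Set.mem_iInter₂.mp (hns k) j (Finset.mem_range_succ_iff.mpr hj)).le)
    tendsto_one_div_add_atTop_nhds_zero_nat

theorem multipleRecurrentAlong_of_topRecSet {d : ℕ} {S : Set ℤ} (hS : TopRecSet d S) :
    MultipleRecurrentAlong d S := by
  intro X _ _ _ T
  obtain ⟨M, -, hM⟩ := exists_minimal_isSubsystem T (K := Set.univ)
    ⟨Set.univ_nonempty, isClosed_univ, Set.preimage_univ.symm⟩
  have : CompactSpace M := isCompact_iff_compactSpace.mp hM.prop.2.1.isCompact
  have : Nonempty M := hM.prop.1.to_subtype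
  obtain ⟨x, ns, hnsS, hns⟩ := exists_multiple_recurrent_point (minimalTDS_sets T hM) hS
  refine ⟨x, ns, hnsS, fun j _ hj => ?_⟩
  simpa only [Function.comp_def, hIter_sets_val] using
    (continuous_subtype_val.tendsto x).comp (hns j hj)

theorem topRecSet_of_topIntersective {d : ℕ} {S : Set ℤ} (hS : TopIntersective d S) :
    TopRecSet d S := by
  intro X _ _ T hT U hU hne
  obtain ⟨x, hx⟩ := hne
  obtain ⟨n, hnS, m, hm⟩ := hS _ (syndetic_nset T hT x hU ⟨x, hx⟩)
  refine ⟨n, hnS, hIter T m x, Set.mem_iInter₂.mpr fun j hj => ?_⟩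
  rw [Set.mem_preimage, ← hIter_add, add_comm]
  exact hm j hj

theorem exists_mem_forall_eq_of_mem_closure {ι β : Type*} [TopologicalSpace β]
    [DiscreteTopology β] {R : Set (ι → β)} {z : ι → β} (hz : z ∈ closure R) (W : Finset ι) :
    ∃ r ∈ R, ∀ k ∈ W, r k = z k := by
  have hV : IsOpen (⋂ k ∈ W, (fun w : ι → β => w k) ⁻¹' {z k}) :=
    isOpen_biInter_finset fun k _ => (isOpen_discrete _).preimage (continuous_apply k)
  obtain ⟨r, hrV, hrR⟩ := mem_closure_iff.mp hz _ hV (Set.mem_iInter₂.mpr fun _ _ => rfl)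
  exact ⟨r, hrR, fun k hk => Set.mem_iInter₂.mp hrV k hk⟩

section Shift

def zShift {β : Type*} [TopologicalSpace β] : (ℤ → β) ≃ₜ (ℤ → β) where
  toFun z k := z (k + 1)
  invFun z k := z (k - 1)
  left_inv z := by simp
  right_inv z := by simp
  continuous_toFun := continuous_pi fun k => continuous_apply (k + 1)
  continuous_invFun := continuous_pi fun k => continuous_apply (k - 1)

theorem hIter_zShift {β : Type*} [TopologicalSpace β] (n : ℤ) (z : ℤ → β) (k : ℤ) :
    hIter zShift n z k = z (k + n) := by
  induction n using Int.induction_on generalizing z k with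
  | zero => rw [hIter_zero, add_zero]
  | succ m ih =>
    rw [hIter_add, hIter_one, ih]
    exact congrArg z (add_assoc k m 1)
  | pred m ih =>
    rw [sub_eq_add_neg, hIter_add, hIter_neg_one, ih]
    exact congrArg z (by ring)

theorem exists_forall_eq_true_iff_of_mem_orbitClosure {A : Set ℤ} {z : ℤ → Bool}
    (hz : z ∈ orbitClosure zShift fun k => decide (k ∈ A)) (W : Finset ℤ) :
    ∃ m : ℤ, ∀ k ∈ W, z k = true ↔ k + m ∈ A := by
  obtain ⟨_, ⟨m, rfl⟩, hm⟩ := exists_mem_forall_eq_of_mem_closure hz W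
  refine ⟨m, fun k hk => ?_⟩
  rw [← hm k hk]
  simp only [hIter_zShift, decide_eq_true_iff]

theorem exists_eq_true_of_mem_orbitClosure {A : Set ℤ} (hA : Syndetic A) {z : ℤ → Bool}
    (hz : z ∈ orbitClosure zShift fun k => decide (k ∈ A)) : ∃ k, z k = true := by
  obtain ⟨N, hN⟩ := hA
  obtain ⟨m, hm⟩ := exists_forall_eq_true_iff_of_mem_orbitClosure hz (Finset.Icc 0 N)
  obtain ⟨j, hmj, hjN, hjA⟩ := hN m
  exact ⟨j - m, (hm _ (Finset.mem_Icc.mpr ⟨by omega, by omega⟩)).mpr (by simpa using hjA)⟩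

end Shift

theorem topIntersective_of_multipleRecurrentAlong {d : ℕ} {S : Set ℤ}
    (h : MultipleRecurrentAlong d S) : TopIntersective d S := by
  intro A hA
  set K := orbitClosure zShift fun k => decide (k ∈ A)
  have hK : K = zShift ⁻¹' K := (preimage_orbitClosure _ _).symm
  let T : K ≃ₜ K := zShift.sets hK
  let : MetricSpace K := TopologicalSpace.metrizableSpaceMetric K
  have : CompactSpace K := isCompact_iff_compactSpace.mp isClosed_closure.isCompact
  have : Nonempty K := ⟨⟨_, mem_orbitClosure_self _ _⟩⟩
  obtain ⟨x, ns, hnsS, hns⟩ := h K T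
  obtain ⟨k, hk⟩ := exists_eq_true_of_mem_orbitClosure hA x.2
  -- `y = T^k x` has a `1` at the origin and is recurrent along `ns` just like `x`
  set y := hIter T k x
  have hy (n : ℤ) : ((hIter T n y : K) : ℤ → Bool) 0 = (y : ℤ → Bool) n := by
    rw [hIter_sets_val, hIter_zShift, zero_add]
  have hy0 : (y : ℤ → Bool) 0 = true := by
    rw [hIter_sets_val, hIter_zShift, zero_add]
    exact hk
  have hU : IsOpen {w : K | (w : ℤ → Bool) 0 = true} :=
    (isOpen_discrete ({true} : Set Bool)).preimage (f := fun w : K => (w : ℤ → Bool) 0)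
      ((continuous_apply 0).comp continuous_subtype_val)
  have h_ev : ∀ᶠ i in atTop, ∀ j ∈ Finset.Icc 1 d,
      ((hIter T ((j : ℤ) * ns i) y : K) : ℤ → Bool) 0 = true :=
    (eventually_all_finset _).mpr fun j hj =>
      tendsto_hIter_hIter T (hns j (Finset.mem_Icc.mp hj).1 (Finset.mem_Icc.mp hj).2) k
        (hU.mem_nhds hy0)
  obtain ⟨i, hi⟩ := h_ev.exists
  obtain ⟨m, hm⟩ := exists_forall_eq_true_iff_of_mem_orbitClosure y.2
    ((Finset.range (d + 1)).image fun j : ℕ => (j : ℤ) * ns i)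
  refine ⟨ns i, hnsS i, m, fun j hj => ?_⟩
  rw [add_comm, ← hm _ (Finset.mem_image_of_mem _ hj), ← hy]
  rcases Nat.eq_zero_or_pos j with rfl | hj0
  · simpa [hIter_zero] using hy0
  · exact hi j (Finset.mem_Icc.mpr ⟨hj0, Finset.mem_range_succ_iff.mp hj⟩)

theorem statement3_general (d : ℕ) (S : Set ℤ) :
    ((∀ A : Set ℤ, Syndetic A →
        ∃ n ∈ S, ∃ m : ℤ, ∀ j ∈ Finset.range (d + 1), m + (j : ℤ) * n ∈ A)
      ↔ TopRecSet d S) ∧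
    (TopRecSet d S ↔
      ∀ (X : Type) [MetricSpace X] [CompactSpace X] [Nonempty X] (T : X ≃ₜ X),
        ∃ (x : X) (ns : ℕ → ℤ), (∀ i, ns i ∈ S) ∧
          ∀ j : ℕ, 1 ≤ j → j ≤ d →
            Filter.Tendsto (fun i => hIter T ((j : ℤ) * ns i) x) Filter.atTop (nhds x)) := by
  have h12 : TopIntersective d S → TopRecSet d S := topRecSet_of_topIntersective
  have h23 : TopRecSet d S → MultipleRecurrentAlong d S := multipleRecurrentAlong_of_topRecSet
  have h31 : MultipleRecurrentAlong d S → TopIntersective d S :=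
    topIntersective_of_multipleRecurrentAlong
  exact ⟨⟨h12, h31 ∘ h23⟩, ⟨h23, h12 ∘ h31⟩⟩

/-- Equivalent characterizations of sets of `d`-topological recurrence. -/
theorem statement3 (d : ℕ) (hd : 1 ≤ d) (S : Set ℤ) :
    ((∀ A : Set ℤ, Syndetic A →
        ∃ n ∈ S, ∃ m : ℤ, ∀ j ∈ Finset.range (d + 1), m + (j : ℤ) * n ∈ A)
      ↔ TopRecSet d S) ∧
    (TopRecSet d S ↔
      ∀ (X : Type) [MetricSpace X] [CompactSpace X] [Nonempty X] (T : X ≃ₜ X),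
        ∃ (x : X) (ns : ℕ → ℤ), (∀ i, ns i ∈ S) ∧
          ∀ j : ℕ, 1 ≤ j → j ≤ d →
            Filter.Tendsto (fun i => hIter T ((j : ℤ) * ns i) x) Filter.atTop (nhds x)) :=
  statement3_general d S
end

section
/- For every integer d ≥ 1, the family of sets of d-recurrence has the Ramsey property: if S ⊆ ℤ is a set of d-recurrence and S = S_1 ∪ S_2, then S_1 is a set of d-recurrence or S_2 is a set of d-recurrence. -/
open scoped Classical
open MeasureTheory Filter Topology

/-!
If `A₁ ⊆ Y₁` has no multiple return time in `S₁` under `T₁`, and `A₂ ⊆ Y₂` none in `S₂`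
under `T₂`, then `A₁ × A₂` has none in `S₁ ∪ S₂` under `T₁ × T₂`: the set of points of
`A₁ × A₂` returning at times `0, n, …, dn` is the product of the corresponding sets for
the two factors, so its product measure vanishes as soon as one factor does.
-/

def Equiv.Perm.prodCongrHom (α β : Type*) :
    Equiv.Perm α × Equiv.Perm β →* Equiv.Perm (α × β) where
  toFun e := Equiv.prodCongr e.1 e.2
  map_one' := rfl
  map_mul' _ _ := rfl

theorem Equiv.Perm.prodCongr_zpow {α β : Type*} (e₁ : Equiv.Perm α) (e₂ : Equiv.Perm β)
    (m : ℤ) : Equiv.prodCongr e₁ e₂ ^ m = Equiv.prodCongr (e₁ ^ m) (e₂ ^ m) :=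
  (map_zpow (Equiv.Perm.prodCongrHom α β) (e₁, e₂) m).symm

theorem zIter_prodCongr {α β : Type*} (e₁ : Equiv.Perm α) (e₂ : Equiv.Perm β) (m : ℤ)
    (p : α × β) : zIter (Equiv.prodCongr e₁ e₂) m p = (zIter e₁ m p.1, zIter e₂ m p.2) := by
  rw [zIter, Equiv.Perm.prodCongr_zpow]
  rfl

theorem iInter_preimage_zIter_prodCongr {α β ι : Type*} (e₁ : Equiv.Perm α)
    (e₂ : Equiv.Perm β) (s : Finset ι) (m : ι → ℤ) (A₁ : Set α) (A₂ : Set β) :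
    ⋂ i ∈ s, zIter (Equiv.prodCongr e₁ e₂) (m i) ⁻¹' (A₁ ×ˢ A₂) =
      (⋂ i ∈ s, zIter e₁ (m i) ⁻¹' A₁) ×ˢ ⋂ i ∈ s, zIter e₂ (m i) ⁻¹' A₂ := by
  ext p
  simp only [Set.mem_iInter, Set.mem_preimage, zIter_prodCongr, Set.mem_prod, forall_and]

theorem not_measRecSet_union {d : ℕ} {S₁ S₂ : Set ℤ} (h₁ : ¬ MeasRecSet d S₁)
    (h₂ : ¬ MeasRecSet d S₂) : ¬ MeasRecSet d (S₁ ∪ S₂) := by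
  simp only [MeasRecSet, not_forall, not_exists, not_and, not_lt, nonpos_iff_eq_zero] at h₁ h₂
  obtain ⟨Y₁, _, _, μ₁, _, T₁, hT₁, A₁, hA₁, hμA₁, hret₁⟩ := h₁
  obtain ⟨Y₂, _, _, μ₂, _, T₂, hT₂, A₂, hA₂, hμA₂, hret₂⟩ := h₂
  intro hS
  obtain ⟨n, hn, hpos⟩ := hS (Y₁ × Y₂) (μ₁.prod μ₂) (T₁.prodCongr T₂) (hT₁.prod hT₂)
    (A₁ ×ˢ A₂) (hA₁.prod hA₂)
    (by rw [Measure.prod_prod]; exact ENNReal.mul_pos hμA₁.ne' hμA₂.ne')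
  rw [show (T₁.prodCongr T₂).toEquiv = Equiv.prodCongr T₁.toEquiv T₂.toEquiv from rfl,
    iInter_preimage_zIter_prodCongr _ _ _ (fun j : ℕ => (j : ℤ) * n), Measure.prod_prod] at hpos
  rcases hn with hn | hn
  · exact hpos.ne' (by rw [hret₁ n hn, zero_mul])
  · exact hpos.ne' (by rw [hret₂ n hn, mul_zero])

theorem statement4_general (d : ℕ) (S S₁ S₂ : Set ℤ)
    (hS : MeasRecSet d S) (hU : S = S₁ ∪ S₂) :
    MeasRecSet d S₁ ∨ MeasRecSet d S₂ := by
  subst hU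
  by_contra h
  rw [not_or] at h
  exact not_measRecSet_union h.1 h.2 hS

/-- The family of sets of `d`-recurrence has the Ramsey property. -/
theorem statement4 (d : ℕ) (hd : 1 ≤ d) (S S₁ S₂ : Set ℤ)
    (hS : MeasRecSet d S) (hU : S = S₁ ∪ S₂) :
    MeasRecSet d S₁ ∨ MeasRecSet d S₂ :=
  statement4_general d S S₁ S₂ hS hU
end

section
/- Let d ≥ 1 be an integer. Every set A ⊆ ℤ that contains finite IP-sets of arbitrarily long lengths is a Poincaré recurrence set of order d. Consequently, a set A ⊆ ℤ is a Poincaré recurrence set of order d for every integer d ≥ 1 if and only if A contains finite IP-sets of arbitrarily long lengths. -/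
open scoped Classical
open MeasureTheory Filter Topology

/-!
The recurrence statement is proved in a quantitative form, by induction on the length `t`:
for every `c > 0` there is `K` such that every set `S` with `μ S ≥ c` returns to itself along
all of `FS(n₁, …, n_t)` for some `n` whose finite sums are finite sums of any prescribed
`p₁, …, p_K`. For the inductive step choose `N` with `N c > μ Y + 1`. Among the `N` translates
`T^{-q_j} S` by the partial sums `q_j = p₁ + ⋯ + p_{j-1}`, two must overlap in measure more than
`1 / N²`; so `n₁ = q_j - q_i`, a block sum of the `p`'s, satisfies `μ (S ∩ T^{-n₁} S) > 1 / N²`,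
and the induction hypothesis applied to this set and the remaining `p`'s supplies `n₂, …, n_t`.
The converse holds already for the trivial one-point system.
-/

open scoped ENNReal Pointwise
open Finset Function

section zIter

variable {Y : Type*}

lemma zIter_add (T : Equiv.Perm Y) (m n : ℤ) : zIter T (m + n) = zIter T m ∘ zIter T n := by
  simp [zIter, zpow_add]

variable [MeasurableSpace Y] {μ : Measure Y} {T : Y ≃ᵐ Y}

lemma measurePreserving_zIter (hT : MeasurePreserving T μ μ) :
    ∀ m : ℤ, MeasurePreserving (zIter T.toEquiv m) μ μ
  | Int.ofNat n => by simpa [zIter, Equiv.Perm.coe_pow] using hT.iterate n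
  | Int.negSucc n => by
    simpa [zIter, zpow_negSucc, ← inv_pow, Equiv.Perm.coe_pow] using (hT.symm T).iterate (n + 1)

lemma measure_preimage_zIter_inter (hT : MeasurePreserving T μ μ) {S : Set Y}
    (hS : MeasurableSet S) (a b : ℤ) :
    μ (zIter T.toEquiv a ⁻¹' S ∩ zIter T.toEquiv b ⁻¹' S) =
      μ (S ∩ zIter T.toEquiv (b - a) ⁻¹' S) := by
  have hb : zIter T.toEquiv b = zIter T.toEquiv (b - a) ∘ zIter T.toEquiv a := by
    rw [← zIter_add, sub_add_cancel]
  rw [hb, Set.preimage_comp, ← Set.preimage_inter, (measurePreserving_zIter hT a).measure_preimage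
    (hS.inter ((measurePreserving_zIter hT (b - a)).measurable hS)).nullMeasurableSet]

end zIter

section FS

variable {t N K : ℕ}

lemma FS_fin_zero (n : Fin 0 → ℤ) : FS n = ∅ :=
  Set.eq_empty_of_forall_notMem fun _ ⟨_, ⟨i, _⟩, _⟩ => i.elim0

lemma FS_cons_subset (a : ℤ) (n : Fin t → ℤ) :
    FS (Fin.cons a n : Fin (t + 1) → ℤ) ⊆ insert a (FS n ∪ (a +ᵥ FS n)) := by
  rintro _ ⟨I, ⟨i₀, hi₀⟩, rfl⟩
  set J := univ.filter fun j : Fin t => j.succ ∈ I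
  have hsum : ∑ i ∈ I, (Fin.cons a n : Fin (t + 1) → ℤ) i =
      (if 0 ∈ I then a else 0) + ∑ j ∈ J, n j := by
    rw [← univ_inter I, ← sum_ite_mem, Fin.sum_univ_succ, sum_filter]
    simp
  by_cases h0 : 0 ∈ I
  · rcases J.eq_empty_or_nonempty with hJ | hJ
    · simp [hsum, h0, hJ]
    · exact Or.inr (Or.inr ⟨_, ⟨J, hJ, rfl⟩, by simp [hsum, h0]⟩)
  · obtain ⟨j, rfl⟩ := Fin.exists_succ_eq.2 (ne_of_mem_of_not_mem hi₀ h0)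
    exact Or.inr (Or.inl ⟨J, ⟨j, by simpa [J] using hi₀⟩, by simp [hsum, h0]⟩)

lemma subset_FS_append (u : Fin N → ℤ) (v : Fin K → ℤ) :
    FS u ∪ FS v ∪ (FS u + FS v) ⊆ FS (Fin.append u v) := by
  have hdisj (I : Finset (Fin N)) (J : Finset (Fin K)) :
      Disjoint (I.map (Fin.castAddEmb K)) (J.map (Fin.natAddEmb N)) := by
    simp only [Finset.disjoint_left, Finset.mem_map, Fin.castAddEmb_apply, Fin.natAddEmb_apply]
    rintro _ ⟨i, -, rfl⟩ ⟨j, -, h⟩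
    exact absurd (congrArg Fin.val h) (by simp; omega)
  rintro _ ((⟨I, hI, rfl⟩ | ⟨J, hJ, rfl⟩) | ⟨_, ⟨I, hI, rfl⟩, _, ⟨J, hJ, rfl⟩, rfl⟩)
  · exact ⟨I.map (Fin.castAddEmb K), hI.map, by simp⟩
  · exact ⟨J.map (Fin.natAddEmb N), hJ.map, by simp⟩
  · refine ⟨I.map (Fin.castAddEmb K) ∪ J.map (Fin.natAddEmb N), hI.map.mono subset_union_left, ?_⟩
    simp [sum_union (hdisj I J)]

lemma FS_cons_subset_FS_append {u : Fin N → ℤ} {v : Fin K → ℤ} {a : ℤ} {n : Fin t → ℤ}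
    (ha : a ∈ FS u) (hn : FS n ⊆ FS v) :
    FS (Fin.cons a n : Fin (t + 1) → ℤ) ⊆ FS (Fin.append u v) := by
  refine (FS_cons_subset a n).trans (subset_trans ?_ (subset_FS_append u v))
  refine Set.insert_subset (.inl (.inl ha)) (Set.union_subset ?_ ?_)
  · exact hn.trans (Set.subset_union_right.trans Set.subset_union_left)
  · exact (Set.vadd_set_subset_add ha).trans ((Set.add_subset_add_left hn).trans
      Set.subset_union_right)

end FS

lemma inter_iInter_preimage_cons_subset {Y : Type*} {t : ℕ} (T : Equiv.Perm Y) (S : Set Y)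
    (a : ℤ) (n : Fin t → ℤ) :
    (S ∩ zIter T a ⁻¹' S) ∩ ⋂ m ∈ FS n, zIter T m ⁻¹' (S ∩ zIter T a ⁻¹' S) ⊆
      S ∩ ⋂ m ∈ FS (Fin.cons a n : Fin (t + 1) → ℤ), zIter T m ⁻¹' S := by
  rintro x ⟨⟨hxS, hxa⟩, hx⟩
  simp only [Set.mem_iInter, Set.mem_preimage, Set.mem_inter_iff] at hx
  refine ⟨hxS, Set.mem_iInter₂.2 fun m hm => ?_⟩
  rcases FS_cons_subset a n hm with rfl | hm | ⟨m', hm', rfl⟩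
  · exact hxa
  · exact (hx m hm).1
  · simpa [zIter_add] using (hx m' hm').2

lemma exists_ne_lt_measure_inter {Y ι : Type*} [MeasurableSpace Y] [Fintype ι] (μ : Measure Y)
    {B : ι → Set Y} (hB : ∀ i, MeasurableSet (B i)) {c ε : ℝ≥0∞} (hc : ∀ i, c ≤ μ (B i))
    (h : μ Set.univ + Fintype.card ι ^ 2 * ε < Fintype.card ι * c) :
    ∃ i j, i ≠ j ∧ ε < μ (B i ∩ B j) := by
  by_contra! hsmall
  set C : ι → Set Y := fun i => B i \ ⋃ (j) (_ : j ≠ i), B j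
  have hC_disj : Set.Pairwise (univ : Finset ι) (AEDisjoint μ on C) := by
    intro i _ j _ hij
    refine Disjoint.aedisjoint (Set.disjoint_left.2 fun x hxi hxj => hxj.2 ?_)
    exact Set.mem_iUnion₂.2 ⟨i, hij, hxi.1⟩
  have hC_meas (i : ι) : NullMeasurableSet (C i) μ :=
    ((hB i).diff (.iUnion fun j => .iUnion fun _ => hB j)).nullMeasurableSet
  have hB_le (i : ι) : μ (B i) ≤ μ (C i) + Fintype.card ι * ε := by
    calc μ (B i) ≤ μ (B i ∩ ⋃ (j) (_ : j ≠ i), B j) + μ (C i) := measure_le_inter_add_sdiff _ _ _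
      _ ≤ Fintype.card ι * ε + μ (C i) := by
        gcongr
        rw [Set.inter_iUnion₂]
        calc μ (⋃ (j) (_ : j ≠ i), B i ∩ B j) ≤ ∑ j, μ (⋃ (_ : j ≠ i), B i ∩ B j) :=
              measure_iUnion_fintype_le _ _
          _ ≤ ∑ j : ι, ε := sum_le_sum fun j _ => by
              by_cases hj : j = i
              · simp [hj]
              · simpa [hj] using hsmall i j (Ne.symm hj)
          _ = Fintype.card ι * ε := by simp
      _ = _ := add_comm _ _
  refine (h.trans_le ?_).false
  calc (Fintype.card ι : ℝ≥0∞) * c = ∑ i : ι, c := by simp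
    _ ≤ ∑ i, (μ (C i) + Fintype.card ι * ε) := sum_le_sum fun i _ => (hc i).trans (hB_le i)
    _ = ∑ i, μ (C i) + Fintype.card ι ^ 2 * ε := by simp [sum_add_distrib, sq, mul_assoc]
    _ ≤ μ Set.univ + Fintype.card ι ^ 2 * ε := by
      gcongr
      exact sum_measure_le_measure_univ (fun i _ => hC_meas i) hC_disj

theorem exists_FS_subset_measure_inter_pos {Y : Type*} [MeasurableSpace Y] {μ : Measure Y}
    [IsFiniteMeasure μ] {T : Y ≃ᵐ Y} (hT : MeasurePreserving T μ μ) (t : ℕ) {c : ℝ≥0∞}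
    (hc : 0 < c) :
    ∃ K, ∀ S, MeasurableSet S → c ≤ μ S → ∀ p : Fin K → ℤ, ∃ n : Fin t → ℤ,
      FS n ⊆ FS p ∧ 0 < μ (S ∩ ⋂ m ∈ FS n, zIter T.toEquiv m ⁻¹' S) := by
  induction t generalizing c with
  | zero =>
    exact ⟨0, fun S _ hcS p => ⟨Fin.elim0, by simp [FS_fin_zero], by
      simpa [FS_fin_zero] using hc.trans_le hcS⟩⟩
  | succ t ih =>
    obtain ⟨N, hN⟩ := ENNReal.exists_nat_mul_gt hc.ne' (b := μ Set.univ + 1) (by finiteness)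
    set ε : ℝ≥0∞ := ((N : ℝ≥0∞) ^ 2)⁻¹
    obtain ⟨K, hK⟩ := ih (c := ε) (ENNReal.inv_pos.2 (by simp))
    refine ⟨N + K, fun S hS hcS p => ?_⟩
    obtain ⟨u, v, rfl⟩ : ∃ u v, p = Fin.append u v := ⟨_, _, Fin.append_castAdd_natAdd.symm⟩
    set q : Fin N → ℤ := fun j => ∑ k ∈ Iio j, u k
    have hmp := measurePreserving_zIter hT
    obtain ⟨i, j, hij, hε⟩ : ∃ i j, i < j ∧ ε < μ (S ∩ zIter T.toEquiv (q j - q i) ⁻¹' S) := by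
      obtain ⟨i, j, hne, h⟩ := exists_ne_lt_measure_inter μ
        (B := fun j => zIter T.toEquiv (q j) ⁻¹' S) (fun j => (hmp _).measurable hS) (ε := ε)
        (fun j => ((hmp _).measure_preimage hS.nullMeasurableSet).ge.trans' hcS) (by
          simpa [ε] using (add_le_add_right (ENNReal.mul_inv_le_one _) _).trans_lt hN)
      rcases hne.lt_or_gt with hlt | hgt
      · exact ⟨i, j, hlt, by rwa [measure_preimage_zIter_inter hT hS] at h⟩
      · exact ⟨j, i, hgt, by rwa [Set.inter_comm, measure_preimage_zIter_inter hT hS] at h⟩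
    have hq : q j - q i = ∑ k ∈ Iio j \ Iio i, u k := by
      simp only [q, ← sum_sdiff (Iio_subset_Iio hij.le), add_sub_cancel_right]
    obtain ⟨n, hn, hpos⟩ := hK _ (hS.inter ((hmp _).measurable hS)) hε.le v
    refine ⟨Fin.cons (q j - q i) n, ?_,
      hpos.trans_le (measure_mono (inter_iInter_preimage_cons_subset _ _ _ _))⟩
    exact FS_cons_subset_FS_append ⟨_, ⟨i, by simpa using hij⟩, hq⟩ hn

theorem ContainsArbLongFIP.poincareRecSet {A : Set ℤ} (hA : ContainsArbLongFIP A) (d : ℕ) :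
    PoincareRecSet d A := by
  intro Y _ _ μ _ T hT S hS hμS
  obtain ⟨K, hK⟩ := exists_FS_subset_measure_inter_pos hT d hμS
  obtain ⟨p, hp⟩ := hA (K + 1) K.succ_pos
  obtain ⟨u, v, rfl⟩ : ∃ u v, p = Fin.append u v := ⟨_, _, Fin.append_castAdd_natAdd.symm⟩
  obtain ⟨n, hn, hpos⟩ := hK S hS le_rfl u
  exact ⟨n, hn.trans ((Set.subset_union_left.trans Set.subset_union_left).trans
    ((subset_FS_append u v).trans hp)), hpos⟩

theorem PoincareRecSet.exists_FS_subset {d : ℕ} {A : Set ℤ} (hA : PoincareRecSet d A) :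
    ∃ n : Fin d → ℤ, FS n ⊆ A := by
  obtain ⟨n, hn, -⟩ := hA Unit (Measure.dirac ()) (MeasurableEquiv.refl Unit)
    (MeasurePreserving.id _) Set.univ MeasurableSet.univ (by simp)
  exact ⟨n, hn⟩

/-- Sets containing finite IP-sets of arbitrarily long lengths are Poincaré
recurrence sets of every order; `F_{P_∞} = F_{fip}`. -/
theorem statement11 (A : Set ℤ) :
    (∀ d : ℕ, 1 ≤ d → ContainsArbLongFIP A → PoincareRecSet d A) ∧
    ((∀ d : ℕ, 1 ≤ d → PoincareRecSet d A) ↔ ContainsArbLongFIP A) :=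
  ⟨fun d _ hA => hA.poincareRecSet d,
    fun h k hk => (h k hk).exists_FS_subset, fun hA d _ => hA.poincareRecSet d⟩
end
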